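/- arXiv:2201.05569 — 3 statements merged into one kernel-verified Lean document; each statement's English description precedes it below -/
import Mathlib

section
/- Let $\Gamma$ be a $(Y,Y')$-distance-biregular graph with $D \ge 3$, where $D$ is the eccentricity of vertices of $Y$. For every integer $i$ with $1 \le i \le \min\{D-1, D'-1\}$: if $c'_{i+1} = c_i$ then $c_{i+1} = c'_i$, and if $c'_{i+1} > c_i$ then $c_{i+1} > c'_i$. -/
/-!
Fix `x ∈ Y` and a neighbour `z ∈ Y'`, and let `A = Γ_{i,i+1}(x,z)`, `B = Γ_{i+1,i}(x,z)`.
Bipartiteness forces every neighbour of `w ∈ A` at distance `i` from `z` to be at distance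
`i - 1` or `i + 1` from `x`, so `w` has exactly `c'_{i+1} - c_i` neighbours in `B`; symmetrically
every vertex of `B` has exactly `c_{i+1} - c'_i` neighbours in `A`. Both sets are nonempty, so
there is an edge between them iff either count is positive, whence the two counts vanish together.
-/

open SimpleGraph Set

/-- A `(Y,Y')`-distance-biregular graph: a finite connected bipartite graph in which
every vertex is distance-regularized, and vertices in the same color class share the
same intersection numbers (`c`, `b` for class `Y` and `c'`, `b'` for class `Y'`),
while the two color classes have different intersection arrays.
`D` (resp. `D'`) is the common eccentricity of vertices in `Y` (resp. `Y'`). -/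
structure DBRG (V : Type) [Fintype V] where
  G : SimpleGraph V
  conn : G.Connected
  Y : Finset V
  Y' : Finset V
  Yne : Y.Nonempty
  Y'ne : Y'.Nonempty
  cover : ∀ v, v ∈ Y ∨ v ∈ Y'
  disj : ∀ v, ¬(v ∈ Y ∧ v ∈ Y')
  bip : ∀ u v, G.Adj u v → (u ∈ Y ↔ v ∈ Y')
  D : ℕ
  D' : ℕ
  eccY : ∀ x ∈ Y, (∃ y, G.dist x y = D) ∧ ∀ y, G.dist x y ≤ D
  eccY' : ∀ x ∈ Y', (∃ y, G.dist x y = D') ∧ ∀ y, G.dist x y ≤ D'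
  c : ℕ → ℕ
  b : ℕ → ℕ
  c' : ℕ → ℕ
  b' : ℕ → ℕ
  hc : ∀ i, 1 ≤ i → ∀ x ∈ Y, ∀ z, G.dist x z = i →
    {w | G.Adj z w ∧ G.dist x w = i - 1}.ncard = c i
  hb : ∀ i, ∀ x ∈ Y, ∀ z, G.dist x z = i →
    {w | G.Adj z w ∧ G.dist x w = i + 1}.ncard = b i
  hc' : ∀ i, 1 ≤ i → ∀ x ∈ Y', ∀ z, G.dist x z = i →
    {w | G.Adj z w ∧ G.dist x w = i - 1}.ncard = c' i
  hb' : ∀ i, ∀ x ∈ Y', ∀ z, G.dist x z = i →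
    {w | G.Adj z w ∧ G.dist x w = i + 1}.ncard = b' i
  c0 : c 0 = 0
  c'0 : c' 0 = 0
  nonreg : ¬ (∀ i, c i = c' i ∧ b i = b' i)

/-- `Γ` is `2`-`Y`-homogeneous with parameters `γ i`: for all `1 ≤ i ≤ D - 1` and all
`x ∈ Y`, `y ∈ Γ₂(x)`, `z ∈ Γ_{i,i}(x,y)`, the number of common neighbours of `x` and `y`
at distance `i - 1` from `z` equals `γ i` (independently of `x`, `y`, `z`). -/
def DBRG.TwoYHom {V : Type} [Fintype V] (Γ : DBRG V) (γ : ℕ → ℕ) : Prop :=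
  ∀ i, 1 ≤ i → i ≤ Γ.D - 1 → ∀ x ∈ Γ.Y, ∀ y, Γ.G.dist x y = 2 →
    ∀ z, Γ.G.dist x z = i → Γ.G.dist y z = i →
      {w | Γ.G.dist z w = i - 1 ∧ Γ.G.Adj x w ∧ Γ.G.Adj y w}.ncard = γ i

namespace SimpleGraph

variable {V : Type*} {G : SimpleGraph V} {u v w x y z : V}

theorem Walk.dist_getVert_of_length_eq_dist (p : G.Walk x y) (hp : p.length = G.dist x y)
    {k : ℕ} (hk : k ≤ p.length) : G.dist x (p.getVert k) = k := by
  have hle : G.dist x (p.getVert k) ≤ k := by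
    simpa [Walk.take_length, hk] using dist_le (p.take k)
  have hge : G.dist (p.getVert k) y ≤ p.length - k := by
    simpa [Walk.drop_length] using dist_le (p.drop k)
  have := (p.drop k).reachable.dist_triangle_right x
  omega

theorem Coloring.dist_ne_of_adj (c : G.Coloring Bool) (hconn : G.Connected) (x : V)
    (huv : G.Adj u v) : G.dist x u ≠ G.dist x v := by
  intro h
  obtain ⟨p, hp⟩ := hconn.exists_walk_length_eq_dist x u
  obtain ⟨q, hq⟩ := hconn.exists_walk_length_eq_dist x v
  have hparity : (c x ↔ c u) ↔ (c x ↔ c v) := by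
    rw [← c.even_length_iff_congr p, ← c.even_length_iff_congr q, hp, hq, h]
  have hcolor := c.valid huv
  generalize c x = a, c u = b, c v = d at hparity hcolor
  cases a <;> cases b <;> cases d <;> simp at hparity hcolor

theorem Coloring.ncard_adj_dist_add_ncard [Finite V] (c : G.Coloring Bool) (hconn : G.Connected)
    (hxz : G.Adj x z) {i : ℕ} (hxw : G.dist x w = i) (hzw : G.dist z w = i + 1) :
    {u | G.Adj w u ∧ G.dist z u = i ∧ G.dist x u = i + 1}.ncard +
      {u | G.Adj w u ∧ G.dist x u = i - 1}.ncard = {u | G.Adj w u ∧ G.dist z u = i}.ncard := by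
  have hsplit : {u | G.Adj w u ∧ G.dist z u = i} =
      {u | G.Adj w u ∧ G.dist z u = i ∧ G.dist x u = i + 1} ∪
        {u | G.Adj w u ∧ G.dist x u = i - 1} := by
    ext u
    simp only [mem_union, mem_ofPred_eq]
    by_cases hwu : G.Adj w u
    · simp only [hwu, true_and]
      have hx := c.dist_ne_of_adj hconn x hwu
      have hx' := hwu.diff_dist_adj (u := x)
      have hz' := hwu.diff_dist_adj (u := z)
      have h1 : G.dist z u ≤ G.dist z x + G.dist x u := hconn.dist_triangle
      have h2 : G.dist x u ≤ G.dist x z + G.dist z u := hconn.dist_triangle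
      rw [dist_eq_one_iff_adj.2 hxz.symm] at h1
      rw [dist_eq_one_iff_adj.2 hxz] at h2
      omega
    · simp [hwu]
  have hdisj : Disjoint {u | G.Adj w u ∧ G.dist z u = i ∧ G.dist x u = i + 1}
      {u | G.Adj w u ∧ G.dist x u = i - 1} :=
    Set.disjoint_left.2 fun u hu hu' => by
      simp only [mem_ofPred_eq] at hu hu'
      omega
  rw [hsplit, ncard_union_eq hdisj]

theorem pos_of_forall_ncard_adj_eq [Finite V] {A B : Set V} {α β : ℕ} (hB : B.Nonempty)
    (hα : ∀ a ∈ A, {b | G.Adj a b ∧ b ∈ B}.ncard = α)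
    (hβ : ∀ b ∈ B, {a | G.Adj b a ∧ a ∈ A}.ncard = β) (h : 0 < β) : 0 < α := by
  obtain ⟨b, hb⟩ := hB
  obtain ⟨a, hba, ha⟩ := nonempty_of_ncard_ne_zero (s := {a | G.Adj b a ∧ a ∈ A})
    (by rw [hβ b hb]; omega)
  rw [← hα a ha]
  exact (ncard_pos (toFinite _)).2 ⟨b, hba.symm, hb⟩

theorem eq_zero_iff_of_forall_ncard_adj_eq [Finite V] {A B : Set V} {α β : ℕ}
    (hA : A.Nonempty) (hB : B.Nonempty)
    (hα : ∀ a ∈ A, {b | G.Adj a b ∧ b ∈ B}.ncard = α)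
    (hβ : ∀ b ∈ B, {a | G.Adj b a ∧ a ∈ A}.ncard = β) : α = 0 ↔ β = 0 := by
  have hαβ := pos_of_forall_ncard_adj_eq hB hα hβ
  have hβα := pos_of_forall_ncard_adj_eq hA hβ hα
  omega

theorem exists_adj_dist_succ_of_forall_ncard_eq [Finite V] (hconn : G.Connected) {j β : ℕ}
    (hβ : ∀ w, G.dist x w = j → {u | G.Adj w u ∧ G.dist x u = j + 1}.ncard = β)
    (hy : j + 1 ≤ G.dist x y) (hw : G.dist x w = j) :
    ∃ u, G.Adj w u ∧ G.dist x u = j + 1 := by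
  obtain ⟨p, hp⟩ := hconn.exists_walk_length_eq_dist x y
  have hβ_pos : 0 < β := by
    rw [← hβ (p.getVert j) (p.dist_getVert_of_length_eq_dist hp (by omega))]
    exact (ncard_pos (toFinite _)).2 ⟨p.getVert (j + 1), p.adj_getVert_succ (by omega),
      p.dist_getVert_of_length_eq_dist hp (by omega)⟩
  exact nonempty_of_ncard_ne_zero (s := {u | G.Adj w u ∧ G.dist x u = j + 1})
    (by rw [hβ w hw]; omega)

theorem exists_dist_eq_and_dist_eq_succ (hconn : G.Connected) (hxz : G.Adj x z) {i : ℕ}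
    (hz : ∀ w, G.dist z w ≤ i → ∃ u, G.Adj w u ∧ G.dist z u = G.dist z w + 1) :
    ∃ w, G.dist x w = i ∧ G.dist z w = i + 1 := by
  induction i with
  | zero => exact ⟨x, dist_self, by rw [dist_comm]; exact dist_eq_one_iff_adj.2 hxz⟩
  | succ i ih =>
    obtain ⟨w, hxw, hzw⟩ := ih fun w hw => hz w (by omega)
    obtain ⟨u, hwu, hzu⟩ := hz w (by omega)
    have h1 : G.dist x u ≤ G.dist x w + G.dist w u := hconn.dist_triangle
    have h2 : G.dist z u ≤ G.dist z x + G.dist x u := hconn.dist_triangle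
    rw [dist_eq_one_iff_adj.2 hwu] at h1
    rw [dist_eq_one_iff_adj.2 hxz.symm] at h2
    exact ⟨u, by omega, by omega⟩

end SimpleGraph

namespace DBRG

variable {V : Type} [Fintype V] (Γ : DBRG V) {w x z : V}

open Classical in
noncomputable def coloring : Γ.G.Coloring Bool :=
  Coloring.mk (fun v => decide (v ∈ Γ.Y)) fun {u v} huv => by
    have := Γ.bip u v huv
    have := Γ.cover v
    have := Γ.disj v
    simp only [ne_eq, decide_eq_decide]
    tauto

theorem exists_adj_dist_succ_of_mem_Y (hx : x ∈ Γ.Y) (hw : Γ.G.dist x w < Γ.D) :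
    ∃ u, Γ.G.Adj w u ∧ Γ.G.dist x u = Γ.G.dist x w + 1 := by
  obtain ⟨⟨y, hy⟩, -⟩ := Γ.eccY x hx
  exact exists_adj_dist_succ_of_forall_ncard_eq Γ.conn (y := y) (w := w) (Γ.hb _ x hx)
    (by omega) rfl

theorem exists_adj_dist_succ_of_mem_Y' (hz : z ∈ Γ.Y') (hw : Γ.G.dist z w < Γ.D') :
    ∃ u, Γ.G.Adj w u ∧ Γ.G.dist z u = Γ.G.dist z w + 1 := by
  obtain ⟨⟨y, hy⟩, -⟩ := Γ.eccY' z hz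
  exact exists_adj_dist_succ_of_forall_ncard_eq Γ.conn (y := y) (w := w) (Γ.hb' _ z hz)
    (by omega) rfl

variable {i : ℕ}

theorem ncard_adj_add_c (hx : x ∈ Γ.Y) (hz : z ∈ Γ.Y') (hxz : Γ.G.Adj x z) (hi : 1 ≤ i)
    (hxw : Γ.G.dist x w = i) (hzw : Γ.G.dist z w = i + 1) :
    {u | Γ.G.Adj w u ∧ Γ.G.dist z u = i ∧ Γ.G.dist x u = i + 1}.ncard + Γ.c i =
      Γ.c' (i + 1) := by
  have hc' := Γ.hc' (i + 1) (by omega) z hz w hzw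
  rw [Nat.add_sub_cancel] at hc'
  rw [← Γ.hc i hi x hx w hxw, ← hc']
  exact Γ.coloring.ncard_adj_dist_add_ncard Γ.conn hxz hxw hzw

theorem ncard_adj_add_c' (hx : x ∈ Γ.Y) (hz : z ∈ Γ.Y') (hxz : Γ.G.Adj x z) (hi : 1 ≤ i)
    (hzw : Γ.G.dist z w = i) (hxw : Γ.G.dist x w = i + 1) :
    {u | Γ.G.Adj w u ∧ Γ.G.dist x u = i ∧ Γ.G.dist z u = i + 1}.ncard + Γ.c' i =
      Γ.c (i + 1) := by
  have hc := Γ.hc (i + 1) (by omega) x hx w hxw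
  rw [Nat.add_sub_cancel] at hc
  rw [← Γ.hc' i hi z hz w hzw, ← hc]
  exact Γ.coloring.ncard_adj_dist_add_ncard Γ.conn hxz.symm hzw hxw

end DBRG

theorem stmt_3_general {V : Type} [Fintype V] (Γ : DBRG V)
    (i : ℕ) (hi1 : 1 ≤ i) (hi2 : i ≤ min (Γ.D - 1) (Γ.D' - 1)) :
    (Γ.c' (i + 1) = Γ.c i → Γ.c (i + 1) = Γ.c' i) ∧
    (Γ.c' (i + 1) > Γ.c i → Γ.c (i + 1) > Γ.c' i) := by
  obtain ⟨x, hx⟩ := Γ.Yne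
  obtain ⟨z, hxz, -⟩ := Γ.exists_adj_dist_succ_of_mem_Y hx (w := x) (by rw [dist_self]; omega)
  have hz : z ∈ Γ.Y' := (Γ.bip x z hxz).1 hx
  have hA : {w | Γ.G.dist x w = i ∧ Γ.G.dist z w = i + 1}.Nonempty :=
    exists_dist_eq_and_dist_eq_succ Γ.conn hxz fun w hw =>
      Γ.exists_adj_dist_succ_of_mem_Y' hz (by omega)
  have hB : {w | Γ.G.dist z w = i ∧ Γ.G.dist x w = i + 1}.Nonempty :=
    exists_dist_eq_and_dist_eq_succ Γ.conn hxz.symm fun w hw =>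
      Γ.exists_adj_dist_succ_of_mem_Y hx (by omega)
  have hαβ := eq_zero_iff_of_forall_ncard_adj_eq (G := Γ.G) hA hB
    (α := Γ.c' (i + 1) - Γ.c i) (β := Γ.c (i + 1) - Γ.c' i)
    (fun a ⟨hxa, hza⟩ => Nat.eq_sub_of_add_eq (Γ.ncard_adj_add_c hx hz hxz hi1 hxa hza))
    (fun b ⟨hzb, hxb⟩ => Nat.eq_sub_of_add_eq (Γ.ncard_adj_add_c' hx hz hxz hi1 hzb hxb))
  obtain ⟨a, hxa, hza⟩ := hA
  obtain ⟨b, hzb, hxb⟩ := hB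
  have := Γ.ncard_adj_add_c hx hz hxz hi1 hxa hza
  have := Γ.ncard_adj_add_c' hx hz hxz hi1 hzb hxb
  omega

theorem stmt_3 {V : Type} [Fintype V] (Γ : DBRG V) (hD : 3 ≤ Γ.D)
    (i : ℕ) (hi1 : 1 ≤ i) (hi2 : i ≤ min (Γ.D - 1) (Γ.D' - 1)) :
    (Γ.c' (i + 1) = Γ.c i → Γ.c (i + 1) = Γ.c' i) ∧
    (Γ.c' (i + 1) > Γ.c i → Γ.c (i + 1) > Γ.c' i) :=
  stmt_3_general Γ i hi1 hi2
end

section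
/- Let $\Gamma$ be a $(Y,Y')$-distance-biregular graph with $D \ge 3$ and $D$ even. Then $p^2_{D,D} = 0$ if and only if $b_{D-1} = 1$, where $p^2_{D,D} = |\Gamma_D(x) \cap \Gamma_D(y)|$ for $x \in Y$, $y \in \Gamma_2(x)$, and $b_{D-1}$ is an intersection number of the color class $Y$. -/
open SimpleGraph Set

/-! With `k i = |Γ_i(x)|` and `n i = |Γ_{i+2}(x) ∩ Γ_i(y)|`, double counting edges gives
`c (i+1) k (i+1) = b i k i` and `c (i+1) n (i+1) = b (i+2) n i`, hence
`b 0 b 1 n i = c (i+1) c (i+2) k (i+2)`. By bipartiteness `Γ_D(x)` splits into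
`Γ_D(x) ∩ Γ_{D-2}(y)` and `Γ_D(x) ∩ Γ_D(y)`, and `c D = b 0` because `D` is even, so
`b 1 n (D-2) = c (D-1) k D`: the second part is empty iff `b 1 = c (D-1)`. Finally `D - 1` is odd,
so `c (D-1) + b (D-1) = k' = c 1 + b 1 = 1 + b 1`. -/

theorem Set.ncard_mul_eq_ncard_mul {α β : Type*} {s : Set α} {t : Set β} (hs : s.Finite)
    (ht : t.Finite) (r : α → β → Prop) {m n : ℕ}
    (hm : ∀ a ∈ s, {b ∈ t | r a b}.ncard = m) (hn : ∀ b ∈ t, {a ∈ s | r a b}.ncard = n) :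
    s.ncard * m = t.ncard * n := by
  classical
  lift s to Finset α using hs
  lift t to Finset β using ht
  simp only [Set.ncard_coe_finset]
  refine Finset.card_mul_eq_card_mul r (fun a ha => ?_) (fun b hb => ?_)
  · rw [← hm a ha, ← Set.ncard_coe_finset, Finset.coe_bipartiteAbove]
    rfl
  · rw [← hn b hb, ← Set.ncard_coe_finset, Finset.coe_bipartiteBelow]
    rfl

namespace SimpleGraph

variable {V : Type*} {G : SimpleGraph V}

lemma exists_adj_dist_eq_of_dist_eq_add_one {u v : V} {n : ℕ} (h : G.dist u v = n + 1) :
    ∃ w, G.Adj v w ∧ G.dist u w = n := by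
  have hr : G.Reachable v u := (Reachable.of_dist_ne_zero (by omega)).symm
  obtain ⟨p, hp⟩ := hr.exists_walk_length_eq_dist
  rw [dist_comm, h] at hp
  cases p with
  | nil => simp at hp
  | @cons _ w _ hvw q =>
    rw [Walk.length_cons, Nat.add_right_cancel_iff] at hp
    refine ⟨w, hvw, le_antisymm ?_ ?_⟩
    · exact dist_comm.trans_le (hp ▸ dist_le q)
    · have := hvw.symm.reachable.dist_triangle_right u
      rw [h, dist_eq_one_iff_adj.mpr hvw.symm] at this
      omega

lemma exists_dist_eq_of_le {u v : V} {j : ℕ} (hj : j ≤ G.dist u v) : ∃ w, G.dist u w = j := by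
  induction h : G.dist u v - j generalizing v with
  | zero => exact ⟨v, by omega⟩
  | succ n ih =>
    have hv : G.dist u v = G.dist u v - 1 + 1 := by omega
    obtain ⟨w, -, hw⟩ := exists_adj_dist_eq_of_dist_eq_add_one hv
    exact ih (v := w) (by omega) (by omega)

end SimpleGraph

namespace DBRG

variable {V : Type} [Fintype V] (Γ : DBRG V) {x y z : V}

lemma mem_Y_iff_of_adj {u v : V} (h : Γ.G.Adj u v) : u ∈ Γ.Y ↔ v ∉ Γ.Y := by
  have := Γ.bip u v h
  have := Γ.cover v
  have := Γ.disj v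
  tauto

lemma even_dist_iff (u v : V) : Even (Γ.G.dist u v) ↔ (u ∈ Γ.Y ↔ v ∈ Γ.Y) := by
  classical
  let c : Γ.G.Coloring Bool :=
    Coloring.mk (fun v => decide (v ∈ Γ.Y)) fun h => by simp [Γ.mem_Y_iff_of_adj h]
  obtain ⟨p, hp⟩ := Γ.conn.exists_walk_length_eq_dist u v
  simpa [← hp, c, Coloring.mk] using c.even_length_iff_congr p

lemma mem_Y_iff_even_dist (hx : x ∈ Γ.Y) : y ∈ Γ.Y ↔ Even (Γ.G.dist x y) := by
  rw [Γ.even_dist_iff, iff_true_left hx]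

lemma mem_Y'_iff_notMem_Y (v : V) : v ∈ Γ.Y' ↔ v ∉ Γ.Y := by
  have := Γ.cover v
  have := Γ.disj v
  tauto

lemma exists_dist_eq (hx : x ∈ Γ.Y) {j : ℕ} (hj : j ≤ Γ.D) : ∃ z, Γ.G.dist x z = j := by
  obtain ⟨⟨z, hz⟩, -⟩ := Γ.eccY x hx
  exact exists_dist_eq_of_le (hz ▸ hj)

lemma c_pos (hx : x ∈ Γ.Y) {j : ℕ} (hj : 1 ≤ j) (hjD : j ≤ Γ.D) : 0 < Γ.c j := by
  obtain ⟨z, hz⟩ := Γ.exists_dist_eq hx hjD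
  have hz' : Γ.G.dist x z = j - 1 + 1 := by omega
  obtain ⟨w, hzw, hw⟩ := exists_adj_dist_eq_of_dist_eq_add_one hz'
  rw [← Γ.hc j hj x hx z hz]
  exact (Set.ncard_pos (Set.toFinite _)).mpr ⟨w, hzw, hw⟩

lemma ncard_neighborSet_of_mem_Y (hx : x ∈ Γ.Y) : (Γ.G.neighborSet x).ncard = Γ.b 0 := by
  rw [← Γ.hb 0 x hx x dist_self]
  simp [neighborSet]

lemma ncard_neighborSet_of_mem_Y' (hx : x ∈ Γ.Y') : (Γ.G.neighborSet x).ncard = Γ.b' 0 := by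
  rw [← Γ.hb' 0 x hx x dist_self]
  simp [neighborSet]

lemma c_add_b_eq_ncard_neighborSet (hx : x ∈ Γ.Y) {j : ℕ} (hj : 1 ≤ j)
    (hz : Γ.G.dist x z = j) : Γ.c j + Γ.b j = (Γ.G.neighborSet z).ncard := by
  have hsplit : Γ.G.neighborSet z =
      {w | Γ.G.Adj z w ∧ Γ.G.dist x w = j - 1} ∪ {w | Γ.G.Adj z w ∧ Γ.G.dist x w = j + 1} := by
    ext w
    simp only [mem_neighborSet, Set.mem_union, Set.mem_ofPred_eq]
    refine ⟨fun hzw => ?_, by tauto⟩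
    -- bipartiteness rules out `dist x w = dist x z`
    have hpar : Even (Γ.G.dist x w) ↔ ¬Even j := by
      rw [← hz, Γ.even_dist_iff, Γ.even_dist_iff, Γ.mem_Y_iff_of_adj hzw]
      tauto
    rcases hzw.diff_dist_adj (u := x) with h | h | h
    · rw [h, hz] at hpar
      tauto
    · exact Or.inr ⟨hzw, by omega⟩
    · exact Or.inl ⟨hzw, by omega⟩
  rw [hsplit, Set.ncard_union_eq _ (Set.toFinite _) (Set.toFinite _), Γ.hc j hj x hx z hz,
    Γ.hb j x hx z hz]
  refine Set.disjoint_left.mpr fun w h1 h2 => ?_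
  have := h1.2
  have := h2.2
  omega

lemma b_D_eq_zero (hx : x ∈ Γ.Y) : Γ.b Γ.D = 0 := by
  obtain ⟨⟨z, hz⟩, hecc⟩ := Γ.eccY x hx
  rw [← Γ.hb Γ.D x hx z hz, Set.ncard_eq_zero (Set.toFinite _)]
  refine Set.eq_empty_of_forall_notMem fun w hw => ?_
  have := hecc w
  have := hw.2
  omega

lemma c_D_eq_b_zero (hx : x ∈ Γ.Y) (hD : 1 ≤ Γ.D) (hev : Even Γ.D) : Γ.c Γ.D = Γ.b 0 := by
  obtain ⟨⟨z, hz⟩, -⟩ := Γ.eccY x hx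
  have hzY : z ∈ Γ.Y := (Γ.mem_Y_iff_even_dist hx).mpr (hz ▸ hev)
  have := Γ.c_add_b_eq_ncard_neighborSet hx hD hz
  rwa [Γ.b_D_eq_zero hx, add_zero, Γ.ncard_neighborSet_of_mem_Y hzY] at this

lemma c_add_b_eq_b'_zero (hx : x ∈ Γ.Y) {j : ℕ} (hj : Odd j) (hjD : j ≤ Γ.D) :
    Γ.c j + Γ.b j = Γ.b' 0 := by
  obtain ⟨z, hz⟩ := Γ.exists_dist_eq hx hjD
  have hzY' : z ∈ Γ.Y' := by
    rwa [Γ.mem_Y'_iff_notMem_Y, Γ.mem_Y_iff_even_dist hx, hz, Nat.not_even_iff_odd]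
  rw [Γ.c_add_b_eq_ncard_neighborSet hx hj.pos hz, Γ.ncard_neighborSet_of_mem_Y' hzY']

lemma c_one (hx : x ∈ Γ.Y) (hD : 1 ≤ Γ.D) : Γ.c 1 = 1 := by
  obtain ⟨z, hz⟩ := Γ.exists_dist_eq hx hD
  have hxz : Γ.G.Adj z x := (dist_eq_one_iff_adj.mp hz).symm
  rw [← Γ.hc 1 le_rfl x hx z hz, ← Set.ncard_singleton x]
  congr 1
  ext w
  simp only [Set.mem_ofPred_eq, Set.mem_singleton_iff, Nat.sub_self, Γ.conn.dist_eq_zero_iff]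
  exact ⟨fun h => h.2.symm, fun h => by subst h; exact ⟨hxz, rfl⟩⟩

lemma b_mul_ncard_sphere (hx : x ∈ Γ.Y) (i : ℕ) :
    Γ.b i * {z | Γ.G.dist x z = i}.ncard =
      Γ.c (i + 1) * {z | Γ.G.dist x z = i + 1}.ncard := by
  rw [mul_comm, mul_comm (Γ.c _)]
  refine Set.ncard_mul_eq_ncard_mul (Set.toFinite _) (Set.toFinite _) Γ.G.Adj
    (fun w hw => ?_) (fun z hz => ?_)
  · rw [← Γ.hb i x hx w hw]
    simp only [Set.mem_ofPred_eq, and_comm]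
  · rw [← Γ.hc (i + 1) (by omega) x hx z hz, Nat.add_sub_cancel]
    simp only [Set.mem_ofPred_eq, and_comm, Γ.G.adj_comm]

lemma b_mul_ncard_shell (hx : x ∈ Γ.Y) (hy : y ∈ Γ.Y) (hxy : Γ.G.dist x y = 2) (i : ℕ) :
    Γ.b (i + 2) * {z | Γ.G.dist x z = i + 2 ∧ Γ.G.dist y z = i}.ncard =
      Γ.c (i + 1) * {z | Γ.G.dist x z = i + 1 + 2 ∧ Γ.G.dist y z = i + 1}.ncard := by
  rw [mul_comm, mul_comm (Γ.c _)]
  refine Set.ncard_mul_eq_ncard_mul (Set.toFinite _) (Set.toFinite _) Γ.G.Adj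
    (fun w ⟨hxw, hyw⟩ => ?_) (fun z ⟨hxz, hyz⟩ => ?_)
  · rw [← Γ.hb (i + 2) x hx w hxw]
    congr 1
    ext z
    simp only [Set.mem_ofPred_eq]
    refine ⟨fun h => ⟨h.2, h.1.1⟩, fun ⟨hwz, hxz⟩ => ⟨⟨hxz, ?_⟩, hwz⟩⟩
    have : Γ.G.dist y z ≤ Γ.G.dist y w + Γ.G.dist w z := Γ.conn.dist_triangle
    have : Γ.G.dist x z ≤ Γ.G.dist x y + Γ.G.dist y z := Γ.conn.dist_triangle
    have : Γ.G.dist w z = 1 := dist_eq_one_iff_adj.mpr hwz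
    omega
  · rw [← Γ.hc (i + 1) (by omega) y hy z hyz, Nat.add_sub_cancel]
    congr 1
    ext w
    simp only [Set.mem_ofPred_eq]
    refine ⟨fun h => ⟨h.2.symm, h.1.2⟩, fun ⟨hzw, hyw⟩ => ⟨⟨?_, hyw⟩, hzw.symm⟩⟩
    have : Γ.G.dist x w ≤ Γ.G.dist x y + Γ.G.dist y w := Γ.conn.dist_triangle
    have : Γ.G.dist x z ≤ Γ.G.dist x w + Γ.G.dist w z := Γ.conn.dist_triangle
    have : Γ.G.dist w z = 1 := dist_eq_one_iff_adj.mpr hzw.symm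
    omega

lemma ncard_dist_eq_zero (x : V) : {z | Γ.G.dist x z = 0}.ncard = 1 := by
  simp [Γ.conn.dist_eq_zero_iff]

lemma b_zero_mul_b_one_mul_ncard_shell (hx : x ∈ Γ.Y) (hy : y ∈ Γ.Y)
    (hxy : Γ.G.dist x y = 2) {i : ℕ} (hi : i + 2 ≤ Γ.D) :
    Γ.b 0 * Γ.b 1 * {z | Γ.G.dist x z = i + 2 ∧ Γ.G.dist y z = i}.ncard =
      Γ.c (i + 1) * Γ.c (i + 2) * {z | Γ.G.dist x z = i + 2}.ncard := by
  induction i with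
  | zero =>
    have hshell : {z | Γ.G.dist x z = 0 + 2 ∧ Γ.G.dist y z = 0} = {y} := by
      ext z
      simp only [Set.mem_ofPred_eq, Set.mem_singleton_iff, Γ.conn.dist_eq_zero_iff]
      exact ⟨fun h => h.2.symm, fun h => by subst h; exact ⟨hxy, rfl⟩⟩
    have h0 := Γ.b_mul_ncard_sphere hx 0
    rw [Γ.ncard_dist_eq_zero, mul_one] at h0
    rw [hshell, Set.ncard_singleton, mul_one, h0, mul_right_comm, mul_assoc,
      Γ.b_mul_ncard_sphere hx 1, mul_assoc]
  | succ i ih =>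
    refine Nat.eq_of_mul_eq_mul_left (Γ.c_pos hx (j := i + 1) (by omega) (by omega)) ?_
    calc Γ.c (i + 1) * (Γ.b 0 * Γ.b 1 *
          {z | Γ.G.dist x z = i + 1 + 2 ∧ Γ.G.dist y z = i + 1}.ncard)
        = Γ.b 0 * Γ.b 1 * (Γ.b (i + 2) *
          {z | Γ.G.dist x z = i + 2 ∧ Γ.G.dist y z = i}.ncard) := by
          rw [Γ.b_mul_ncard_shell hx hy hxy i]
          ring
      _ = Γ.b (i + 2) * (Γ.c (i + 1) * Γ.c (i + 2) * {z | Γ.G.dist x z = i + 2}.ncard) := by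
          rw [← ih (by omega)]
          ring
      _ = Γ.c (i + 1) * (Γ.c (i + 1 + 1) * Γ.c (i + 1 + 2) *
          {z | Γ.G.dist x z = i + 1 + 2}.ncard) := by
          rw [mul_left_comm, mul_assoc, Γ.b_mul_ncard_sphere hx (i + 2)]
          ring

lemma ncard_sphere_D_eq_add (hx : x ∈ Γ.Y) (hy : y ∈ Γ.Y) (hxy : Γ.G.dist x y = 2) :
    {z | Γ.G.dist x z = Γ.D}.ncard =
      {z | Γ.G.dist x z = Γ.D ∧ Γ.G.dist y z = Γ.D - 2}.ncard +
        {z | Γ.G.dist x z = Γ.D ∧ Γ.G.dist y z = Γ.D}.ncard := by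
  have hsplit : {z | Γ.G.dist x z = Γ.D} =
      {z | Γ.G.dist x z = Γ.D ∧ Γ.G.dist y z = Γ.D - 2} ∪
        {z | Γ.G.dist x z = Γ.D ∧ Γ.G.dist y z = Γ.D} := by
    ext z
    simp only [Set.mem_ofPred_eq, Set.mem_union]
    refine ⟨fun hxz => ?_, by tauto⟩
    have : Γ.G.dist y z ≤ Γ.D := (Γ.eccY y hy).2 z
    have : Γ.G.dist x z ≤ Γ.G.dist x y + Γ.G.dist y z := Γ.conn.dist_triangle
    have hpar : Even (Γ.G.dist y z) ↔ Even (Γ.G.dist x z) := by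
      rw [Γ.even_dist_iff, Γ.even_dist_iff, iff_true_left hx, iff_true_left hy]
    rcases (by omega : Γ.G.dist y z = Γ.D - 2 ∨ Γ.G.dist y z + 1 = Γ.D ∨
      Γ.G.dist y z = Γ.D) with h | h | h
    · exact Or.inl ⟨hxz, h⟩
    · rw [hxz, ← h, Nat.even_add_one] at hpar
      tauto
    · exact Or.inr ⟨hxz, h⟩
  rw [hsplit, Set.ncard_union_eq _ (Set.toFinite _) (Set.toFinite _)]
  refine Set.disjoint_left.mpr fun z h1 h2 => ?_
  have := h1.2
  have := h2.2
  have := (Γ.eccY x hx).2 y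
  omega

lemma b_one_mul_ncard_shell_D (hx : x ∈ Γ.Y) (hy : y ∈ Γ.Y) (hxy : Γ.G.dist x y = 2)
    (hev : Even Γ.D) :
    Γ.b 1 * {z | Γ.G.dist x z = Γ.D ∧ Γ.G.dist y z = Γ.D - 2}.ncard =
      Γ.c (Γ.D - 1) * {z | Γ.G.dist x z = Γ.D}.ncard := by
  have h2D : 2 ≤ Γ.D := hxy ▸ (Γ.eccY x hx).2 y
  have hshell := Γ.b_zero_mul_b_one_mul_ncard_shell hx hy hxy (i := Γ.D - 2) (by omega)
  have hcD := Γ.c_D_eq_b_zero hx (by omega) hev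
  rw [show Γ.D - 2 + 1 = Γ.D - 1 by omega, show Γ.D - 2 + 2 = Γ.D by omega, hcD] at hshell
  refine Nat.eq_of_mul_eq_mul_left (hcD ▸ Γ.c_pos hx (by omega) le_rfl) ?_
  rw [← mul_assoc, hshell]
  ring

lemma c_add_b_D_sub_one (hx : x ∈ Γ.Y) (hD : 2 ≤ Γ.D) (hev : Even Γ.D) :
    Γ.c (Γ.D - 1) + Γ.b (Γ.D - 1) = Γ.b 1 + 1 := by
  have hodd : Odd (Γ.D - 1) := by
    obtain ⟨m, hm⟩ := hev
    exact ⟨m - 1, by omega⟩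
  rw [Γ.c_add_b_eq_b'_zero hx hodd (by omega), ← Γ.c_add_b_eq_b'_zero hx odd_one (by omega),
    Γ.c_one hx (by omega), add_comm]

end DBRG

theorem stmt_11_general {V : Type} [Fintype V] (Γ : DBRG V) (hev : Even Γ.D)
    (x : V) (hx : x ∈ Γ.Y) (y : V) (hy : Γ.G.dist x y = 2) :
    {z | Γ.G.dist x z = Γ.D ∧ Γ.G.dist y z = Γ.D}.ncard = 0 ↔ Γ.b (Γ.D - 1) = 1 := by
  have h2D : 2 ≤ Γ.D := hy ▸ (Γ.eccY x hx).2 y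
  have hyY : y ∈ Γ.Y := (Γ.mem_Y_iff_even_dist hx).mpr (hy ▸ even_two)
  have hsplit := Γ.ncard_sphere_D_eq_add hx hyY hy
  have hkey := Γ.b_one_mul_ncard_shell_D hx hyY hy hev
  have hdeg := Γ.c_add_b_D_sub_one hx h2D hev
  have hk : 0 < {z | Γ.G.dist x z = Γ.D}.ncard :=
    (Set.ncard_pos (Set.toFinite _)).mpr (Γ.eccY x hx).1
  have hc : 0 < Γ.c (Γ.D - 1) := Γ.c_pos hx (by omega) (by omega)
  constructor
  · intro hp
    rw [hp, add_zero] at hsplit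
    rw [← hsplit] at hkey
    have := Nat.eq_of_mul_eq_mul_right hk hkey
    omega
  · intro hb
    rw [show Γ.b 1 = Γ.c (Γ.D - 1) by omega] at hkey
    have := Nat.eq_of_mul_eq_mul_left hc hkey
    omega

theorem stmt_11 {V : Type} [Fintype V] (Γ : DBRG V) (hD : 3 ≤ Γ.D) (hev : Even Γ.D)
    (x : V) (hx : x ∈ Γ.Y) (y : V) (hy : Γ.G.dist x y = 2) :
    {z | Γ.G.dist x z = Γ.D ∧ Γ.G.dist y z = Γ.D}.ncard = 0 ↔ Γ.b (Γ.D - 1) = 1 :=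
  stmt_11_general Γ hev x hx y hy
end

section
/- Let $\Gamma$ be a $2$-$Y$-homogeneous $(Y,Y')$-distance-biregular graph with $D \ge 3$, $k' \ge 2$ and $c'_2 \ge 2$. Then $(k'-2)(c_2 - \gamma_2) = (k - c_2)(c'_2 - 1)$, where $k$ and $k'$ are the valencies of vertices in $Y$ and $Y'$ respectively. -/
/-!
Fix `x ∈ Y`, `y ∈ Γ₂(x)` and a common neighbour `w` of `x` and `y`, and double count the edges
between `S = Γ(w) \ {x, y}`, of size `k' - 2`, and `T = Γ(y) \ Γ(x)`, of size `k - c₂`.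
Every `z ∈ S` lies in `Γ₂(x) ∩ Γ₂(y)`, so it has `c₂` neighbours in `Γ(y)`, exactly `γ₂` of them
in `Γ(x)`. Every `u ∈ T` is at distance `2` from `w`, so it has `c'₂` common neighbours with `w`,
all of them in `S` except `y`.
-/

open SimpleGraph Set

open Finset

namespace SimpleGraph

variable {V : Type} {G : SimpleGraph V}

lemma exists_dist_eq_of_le_dist {x v : V} {m : ℕ} (hm : m ≤ G.dist x v) :
    ∃ u, G.dist x u = m := by
  rcases Nat.eq_zero_or_pos (G.dist x v) with h | h
  · exact ⟨x, by rw [dist_self]; omega⟩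
  obtain ⟨p, hp⟩ := (Reachable.of_dist_ne_zero h.ne').exists_walk_length_eq_dist
  refine ⟨p.getVert m, le_antisymm ?_ ?_⟩
  · simpa [Walk.take_length, hp, hm] using dist_le (p.take m)
  · have hdrop := dist_le (p.drop m)
    have htriangle := Reachable.dist_triangle_right ⟨p.drop m⟩ x
    rw [Walk.drop_length, hp] at hdrop
    omega

lemma dist_eq_two_iff {u v : V} :
    G.dist u v = 2 ↔ u ≠ v ∧ ¬ G.Adj u v ∧ (G.commonNeighbors u v).Nonempty := by
  have hreach : G.dist u v = 2 ∨ (G.commonNeighbors u v).Nonempty → G.Reachable u v := by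
    rintro (h | ⟨w, hw⟩)
    · exact Reachable.of_dist_ne_zero (by omega)
    · rw [mem_commonNeighbors] at hw
      exact hw.1.reachable.trans hw.2.reachable.symm
  constructor
  · intro h
    rw [← edist_eq_two_iff, ← (hreach (.inl h)).coe_dist_eq_edist, h]
    rfl
  · intro h
    rw [← Nat.cast_inj (R := ℕ∞), (hreach (.inr h.2.2)).coe_dist_eq_edist]
    exact edist_eq_two_iff.mpr h

lemma dist_eq_two_of_adj_of_adj {u w v : V} (huw : G.Adj u w) (hwv : G.Adj w v) (hne : u ≠ v)
    (hnadj : ¬ G.Adj u v) : G.dist u v = 2 :=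
  dist_eq_two_iff.mpr ⟨hne, hnadj, w, G.mem_commonNeighbors.mpr ⟨huw, hwv.symm⟩⟩

lemma exists_adj_adj_of_dist_eq_two {u v : V} (h : G.dist u v = 2) :
    ∃ w, G.Adj u w ∧ G.Adj w v := by
  obtain ⟨w, hw⟩ := (dist_eq_two_iff.mp h).2.2
  rw [mem_commonNeighbors] at hw
  exact ⟨w, hw.1, hw.2.symm⟩

lemma ncard_setOf_adj_and_dist_eq_one [Fintype V] [DecidableEq V] [DecidableRel G.Adj] (z x : V) :
    {w | G.Adj z w ∧ G.dist x w = 1}.ncard = #(G.neighborFinset z ∩ G.neighborFinset x) := by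
  rw [← Set.ncard_coe_finset]
  congr 1
  ext w
  simp [dist_eq_one_iff_adj]

end SimpleGraph

namespace DBRG

variable {V : Type} [Fintype V] (Γ : DBRG V)

lemma mem_Y'_of_adj {u v : V} (h : Γ.G.Adj u v) (hu : u ∈ Γ.Y) : v ∈ Γ.Y' :=
  (Γ.bip u v h).mp hu

lemma mem_Y_of_adj {u v : V} (h : Γ.G.Adj u v) (hu : u ∈ Γ.Y') : v ∈ Γ.Y :=
  (Γ.cover v).resolve_right fun hv => Γ.disj u ⟨(Γ.bip u v h).mpr hv, hu⟩

lemma not_adj_of_mem_Y {u v : V} (hu : u ∈ Γ.Y) (hv : v ∈ Γ.Y) : ¬ Γ.G.Adj u v :=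
  fun h => Γ.disj v ⟨hv, Γ.mem_Y'_of_adj h hu⟩

lemma not_adj_of_mem_Y' {u v : V} (hu : u ∈ Γ.Y') (hv : v ∈ Γ.Y') : ¬ Γ.G.Adj u v :=
  fun h => Γ.disj u ⟨(Γ.bip u v h).mpr hv, hu⟩

lemma exists_mem_Y_dist_eq_two (hD : 2 ≤ Γ.D) : ∃ x ∈ Γ.Y, ∃ y, Γ.G.dist x y = 2 := by
  obtain ⟨x, hx⟩ := Γ.Yne
  obtain ⟨v, hv⟩ := (Γ.eccY x hx).1
  exact ⟨x, hx, exists_dist_eq_of_le_dist (hv ▸ hD)⟩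

lemma dist_eq_two_of_mem_Y {u w v : V} (hu : u ∈ Γ.Y) (huw : Γ.G.Adj u w) (hwv : Γ.G.Adj w v)
    (hne : u ≠ v) : Γ.G.dist u v = 2 :=
  dist_eq_two_of_adj_of_adj huw hwv hne
    (Γ.not_adj_of_mem_Y hu (Γ.mem_Y_of_adj hwv (Γ.mem_Y'_of_adj huw hu)))

lemma dist_eq_two_of_mem_Y' {u w v : V} (hu : u ∈ Γ.Y') (huw : Γ.G.Adj u w) (hwv : Γ.G.Adj w v)
    (hne : u ≠ v) : Γ.G.dist u v = 2 :=
  dist_eq_two_of_adj_of_adj huw hwv hne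
    (Γ.not_adj_of_mem_Y' hu (Γ.mem_Y'_of_adj hwv (Γ.mem_Y_of_adj huw hu)))

variable [DecidableRel Γ.G.Adj]

lemma degree_of_mem_Y {x : V} (hx : x ∈ Γ.Y) : Γ.G.degree x = Γ.b 0 := by
  classical
  have h := Γ.hb 0 x hx x SimpleGraph.dist_self
  rwa [zero_add, ncard_setOf_adj_and_dist_eq_one, Finset.inter_self,
    card_neighborFinset_eq_degree] at h

lemma degree_of_mem_Y' {x : V} (hx : x ∈ Γ.Y') : Γ.G.degree x = Γ.b' 0 := by
  classical
  have h := Γ.hb' 0 x hx x SimpleGraph.dist_self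
  rwa [zero_add, ncard_setOf_adj_and_dist_eq_one, Finset.inter_self,
    card_neighborFinset_eq_degree] at h

variable [DecidableEq V]

lemma card_neighborFinset_inter_of_mem_Y {x z : V} (hx : x ∈ Γ.Y) (hxz : Γ.G.dist x z = 2) :
    #(Γ.G.neighborFinset z ∩ Γ.G.neighborFinset x) = Γ.c 2 := by
  rw [← ncard_setOf_adj_and_dist_eq_one, ← Γ.hc 2 (by norm_num) x hx z hxz]

lemma card_neighborFinset_inter_of_mem_Y' {x z : V} (hx : x ∈ Γ.Y') (hxz : Γ.G.dist x z = 2) :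
    #(Γ.G.neighborFinset z ∩ Γ.G.neighborFinset x) = Γ.c' 2 := by
  rw [← ncard_setOf_adj_and_dist_eq_one, ← Γ.hc' 2 (by norm_num) x hx z hxz]

variable {Γ} in
lemma TwoYHom.card_neighborFinset_inter_inter {γ : ℕ → ℕ} (hhom : Γ.TwoYHom γ)
    (hD : 3 ≤ Γ.D) {x y z : V} (hx : x ∈ Γ.Y) (hxy : Γ.G.dist x y = 2) (hxz : Γ.G.dist x z = 2)
    (hyz : Γ.G.dist y z = 2) :
    #(Γ.G.neighborFinset z ∩ Γ.G.neighborFinset y ∩ Γ.G.neighborFinset x) = γ 2 := by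
  rw [← hhom 2 le_add_self (by omega) x hx y hxy z hxz hyz, ← Set.ncard_coe_finset]
  congr 1
  ext w
  simp [dist_eq_one_iff_adj, and_comm]

variable {x w y : V}

lemma card_erase_erase_neighborFinset (hx : x ∈ Γ.Y) (hxw : Γ.G.Adj x w) (hwy : Γ.G.Adj w y)
    (hxy : x ≠ y) : (#(((Γ.G.neighborFinset w).erase x).erase y) : ℤ) = Γ.b' 0 - 2 := by
  have hxN : x ∈ Γ.G.neighborFinset w := by simpa using hxw.symm
  have hyN : y ∈ (Γ.G.neighborFinset w).erase x := by simpa [hxy.symm] using hwy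
  have hcard_y := card_erase_add_one hyN
  have hcard_x := card_erase_add_one hxN
  rw [card_neighborFinset_eq_degree, Γ.degree_of_mem_Y' (Γ.mem_Y'_of_adj hxw hx)] at hcard_x
  omega

lemma card_neighborFinset_sdiff (hx : x ∈ Γ.Y) (hxw : Γ.G.Adj x w) (hwy : Γ.G.Adj w y)
    (hxy : x ≠ y) :
    (#(Γ.G.neighborFinset y \ Γ.G.neighborFinset x) : ℤ) = Γ.b 0 - Γ.c 2 := by
  have hyY := Γ.mem_Y_of_adj hwy (Γ.mem_Y'_of_adj hxw hx)
  have hsplit := card_sdiff_add_card_inter (Γ.G.neighborFinset y) (Γ.G.neighborFinset x)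
  rw [card_neighborFinset_eq_degree, Γ.degree_of_mem_Y hyY,
    Γ.card_neighborFinset_inter_of_mem_Y hx (Γ.dist_eq_two_of_mem_Y hx hxw hwy hxy)] at hsplit
  omega

variable {Γ} in
lemma TwoYHom.card_bipartiteAbove_neighborFinset_sdiff {γ : ℕ → ℕ} (hhom : Γ.TwoYHom γ)
    (hD : 3 ≤ Γ.D) (hx : x ∈ Γ.Y) (hxw : Γ.G.Adj x w) (hwy : Γ.G.Adj w y) (hxy : x ≠ y) {z : V}
    (hz : z ∈ ((Γ.G.neighborFinset w).erase x).erase y) :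
    (#((Γ.G.neighborFinset y \ Γ.G.neighborFinset x).bipartiteAbove Γ.G.Adj z) : ℤ) =
      Γ.c 2 - γ 2 := by
  obtain ⟨hzy, hzx, hwz⟩ : z ≠ y ∧ z ≠ x ∧ Γ.G.Adj w z := by simpa using hz
  have hyY := Γ.mem_Y_of_adj hwy (Γ.mem_Y'_of_adj hxw hx)
  have hxy2 := Γ.dist_eq_two_of_mem_Y hx hxw hwy hxy
  have hxz2 := Γ.dist_eq_two_of_mem_Y hx hxw hwz hzx.symm
  have hyz2 := Γ.dist_eq_two_of_mem_Y hyY hwy.symm hwz hzy.symm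
  have hfibre : (Γ.G.neighborFinset y \ Γ.G.neighborFinset x).bipartiteAbove Γ.G.Adj z =
      (Γ.G.neighborFinset z ∩ Γ.G.neighborFinset y) \ Γ.G.neighborFinset x := by
    ext u
    simp only [bipartiteAbove, mem_filter, Finset.mem_sdiff, Finset.mem_inter,
      mem_neighborFinset]
    tauto
  have hsplit := card_sdiff_add_card_inter
    (Γ.G.neighborFinset z ∩ Γ.G.neighborFinset y) (Γ.G.neighborFinset x)
  rw [Γ.card_neighborFinset_inter_of_mem_Y hyY hyz2,
    hhom.card_neighborFinset_inter_inter hD hx hxy2 hxz2 hyz2] at hsplit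
  rw [hfibre]
  omega

lemma card_bipartiteBelow_neighborFinset_erase_erase (hx : x ∈ Γ.Y) (hxw : Γ.G.Adj x w)
    (hwy : Γ.G.Adj w y) {u : V} (hu : u ∈ Γ.G.neighborFinset y \ Γ.G.neighborFinset x) :
    (#((((Γ.G.neighborFinset w).erase x).erase y).bipartiteBelow Γ.G.Adj u) : ℤ) =
      Γ.c' 2 - 1 := by
  obtain ⟨hyu, hxu⟩ : Γ.G.Adj y u ∧ ¬ Γ.G.Adj x u := by simpa using hu
  have hwY' := Γ.mem_Y'_of_adj hxw hx
  have hwu2 := Γ.dist_eq_two_of_mem_Y' hwY' hwy hyu (by rintro rfl; exact hxu hxw)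
  have hfibre : (((Γ.G.neighborFinset w).erase x).erase y).bipartiteBelow Γ.G.Adj u =
      (Γ.G.neighborFinset u ∩ Γ.G.neighborFinset w).erase y := by
    ext z
    simp only [bipartiteBelow, mem_filter, mem_erase, Finset.mem_inter, mem_neighborFinset]
    constructor
    · rintro ⟨⟨hzy, -, hwz⟩, hzu⟩
      exact ⟨hzy, hzu.symm, hwz⟩
    · rintro ⟨hzy, huz, hwz⟩
      exact ⟨⟨hzy, by rintro rfl; exact hxu huz.symm, hwz⟩, huz.symm⟩
  have hyN : y ∈ Γ.G.neighborFinset u ∩ Γ.G.neighborFinset w := by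
    simpa using ⟨hyu.symm, hwy⟩
  have hcard := card_erase_add_one hyN
  rw [Γ.card_neighborFinset_inter_of_mem_Y' hwY' hwu2] at hcard
  rw [hfibre]
  omega

end DBRG

theorem stmt_16_general {V : Type} [Fintype V] (Γ : DBRG V) (hD : 3 ≤ Γ.D)
    (γ : ℕ → ℕ) (hhom : Γ.TwoYHom γ) :
    ((Γ.b' 0 : ℤ) - 2) * ((Γ.c 2 : ℤ) - (γ 2 : ℤ)) =
      ((Γ.b 0 : ℤ) - (Γ.c 2 : ℤ)) * ((Γ.c' 2 : ℤ) - 1) := by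
  classical
  obtain ⟨x, hx, y, hxy⟩ := Γ.exists_mem_Y_dist_eq_two (by omega)
  obtain ⟨w, hxw, hwy⟩ := exists_adj_adj_of_dist_eq_two hxy
  have hne : x ≠ y := by
    rintro rfl
    simp at hxy
  have hcount := congrArg (Nat.cast : ℕ → ℤ) <|
    sum_card_bipartiteAbove_eq_sum_card_bipartiteBelow Γ.G.Adj
      (s := ((Γ.G.neighborFinset w).erase x).erase y)
      (t := Γ.G.neighborFinset y \ Γ.G.neighborFinset x)
  push_cast at hcount
  rwa [sum_congr rfl fun z hz =>
      hhom.card_bipartiteAbove_neighborFinset_sdiff hD hx hxw hwy hne hz,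
    sum_congr rfl fun u hu => Γ.card_bipartiteBelow_neighborFinset_erase_erase hx hxw hwy hu,
    sum_const, sum_const, nsmul_eq_mul, nsmul_eq_mul,
    Γ.card_erase_erase_neighborFinset hx hxw hwy hne,
    Γ.card_neighborFinset_sdiff hx hxw hwy hne] at hcount

theorem stmt_16 {V : Type} [Fintype V] (Γ : DBRG V) (hD : 3 ≤ Γ.D)
    (γ : ℕ → ℕ) (hhom : Γ.TwoYHom γ) (hk' : 2 ≤ Γ.b' 0) (hc2' : 2 ≤ Γ.c' 2) :
    ((Γ.b' 0 : ℤ) - 2) * ((Γ.c 2 : ℤ) - (γ 2 : ℤ)) =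
      ((Γ.b 0 : ℤ) - (Γ.c 2 : ℤ)) * ((Γ.c' 2 : ℤ) - 1) :=
  stmt_16_general Γ hD γ hhom
end
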